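/- Exact termination correctness of the double oracle algorithm: let Π_r ⊆ ι and Π_c ⊆ κ be nonempty restricted strategy subsets and let (σ*, τ*) be a mixed Nash equilibrium of the restricted game (σ* supported on Π_r, τ* supported on Π_c) with equilibrium payoff v = U(σ*, τ*). If the full-game best-response values do not improve on v, i.e., max over all i in ι of ∑ j, τ* j * U i j ≤ v and min over all j in κ of ∑ i, σ* i * U i j ≥ v, then (σ*, τ*) is a mixed Nash equilibrium of the full game with value v. -/

import Mathlib

open Finset

/-- Expected payoff of the matrix game `U` under mixed strategies `σ` and `τ`. -/
def pay {ι κ : Type*} [Fintype ι] [Fintype κ] (U : ι → κ → ℝ) (σ : ι → ℝ) (τ : κ → ℝ) : ℝ :=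
  ∑ i, ∑ j, σ i * τ j * U i j

/-- `(σ, τ)` is a mixed Nash equilibrium of the zero-sum matrix game `U`. -/
def isNE {ι κ : Type*} [Fintype ι] [Fintype κ] (U : ι → κ → ℝ) (σ : ι → ℝ) (τ : κ → ℝ) : Prop :=
  σ ∈ stdSimplex ℝ ι ∧ τ ∈ stdSimplex ℝ κ ∧
    (∀ σ' ∈ stdSimplex ℝ ι, pay U σ' τ ≤ pay U σ τ) ∧
    (∀ τ' ∈ stdSimplex ℝ κ, pay U σ τ ≤ pay U σ τ')

/-!
The payoff is bilinear, so the payoff of a mixed deviation is a convex combination of payoffs of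
pure deviations. Hence if no pure row beats `v` against `τ*` and no pure column pushes the payoff
below `v` against `σ*`, no mixed deviation does either, and `(σ*, τ*)` is an equilibrium of the
full game. At an equilibrium, `σ*` secures exactly `v` against every `τ`, while any other `σ'`
secures at most `U(σ', τ*) ≤ v`, so `v` is the maximin value.
-/

section ConvexCombination

variable {𝕜 ι : Type*} [Semiring 𝕜] [PartialOrder 𝕜] [IsOrderedRing 𝕜] [Fintype ι]
  {w : ι → 𝕜} {f : ι → 𝕜} {c : 𝕜}

theorem sum_mul_le_of_mem_stdSimplex (hw : w ∈ stdSimplex 𝕜 ι) (hf : ∀ i, f i ≤ c) :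
    ∑ i, w i * f i ≤ c :=
  calc ∑ i, w i * f i ≤ ∑ i, w i * c :=
        sum_le_sum fun i _ => mul_le_mul_of_nonneg_left (hf i) (hw.1 i)
    _ = c := by rw [← sum_mul, hw.2, one_mul]

theorem le_sum_mul_of_mem_stdSimplex (hw : w ∈ stdSimplex 𝕜 ι) (hf : ∀ i, c ≤ f i) :
    c ≤ ∑ i, w i * f i :=
  calc c = ∑ i, w i * c := by rw [← sum_mul, hw.2, one_mul]
    _ ≤ ∑ i, w i * f i := sum_le_sum fun i _ => mul_le_mul_of_nonneg_left (hf i) (hw.1 i)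

end ConvexCombination

section MatrixGame

variable {ι κ : Type*} [Fintype ι] [Fintype κ] (U : ι → κ → ℝ) {σ : ι → ℝ} {τ : κ → ℝ} {v : ℝ}

theorem pay_eq_sum_row (σ : ι → ℝ) (τ : κ → ℝ) :
    pay U σ τ = ∑ i, σ i * ∑ j, τ j * U i j := by
  simp only [pay, mul_sum, mul_assoc]

theorem pay_eq_sum_col (σ : ι → ℝ) (τ : κ → ℝ) :
    pay U σ τ = ∑ j, τ j * ∑ i, σ i * U i j := by
  rw [pay, sum_comm]
  simp only [mul_sum]
  exact sum_congr rfl fun j _ => sum_congr rfl fun i _ => by ring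

theorem pay_le_of_forall_row_le (hσ : σ ∈ stdSimplex ℝ ι) (hrow : ∀ i, ∑ j, τ j * U i j ≤ v) :
    pay U σ τ ≤ v := by
  rw [pay_eq_sum_row]
  exact sum_mul_le_of_mem_stdSimplex hσ hrow

theorem le_pay_of_forall_le_col (hτ : τ ∈ stdSimplex ℝ κ) (hcol : ∀ j, v ≤ ∑ i, σ i * U i j) :
    v ≤ pay U σ τ := by
  rw [pay_eq_sum_col]
  exact le_sum_mul_of_mem_stdSimplex hτ hcol

theorem isNE_of_forall_row_le_of_forall_le_col (hσ : σ ∈ stdSimplex ℝ ι)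
    (hτ : τ ∈ stdSimplex ℝ κ) (hrow : ∀ i, ∑ j, τ j * U i j ≤ pay U σ τ)
    (hcol : ∀ j, pay U σ τ ≤ ∑ i, σ i * U i j) : isNE U σ τ :=
  ⟨hσ, hτ, fun _ hσ' => pay_le_of_forall_row_le U hσ' hrow,
    fun _ hτ' => le_pay_of_forall_le_col U hτ' hcol⟩

theorem bddBelow_pay_image_stdSimplex (σ : ι → ℝ) :
    BddBelow ((fun τ => pay U σ τ) '' stdSimplex ℝ κ) :=
  (isCompact_stdSimplex ℝ κ).bddBelow_image (by unfold pay; fun_prop)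

theorem isNE.isGreatest_sInf_pay (h : isNE U σ τ) :
    IsGreatest ((fun σ => sInf ((fun τ => pay U σ τ) '' stdSimplex ℝ κ)) '' stdSimplex ℝ ι)
      (pay U σ τ) := by
  obtain ⟨hσ, hτ, hrow, hcol⟩ := h
  have hsecure : IsLeast ((fun τ' => pay U σ τ') '' stdSimplex ℝ κ) (pay U σ τ) :=
    ⟨⟨τ, hτ, rfl⟩, by rintro _ ⟨τ', hτ', rfl⟩; exact hcol τ' hτ'⟩
  refine ⟨⟨σ, hσ, hsecure.csInf_eq⟩, ?_⟩
  rintro _ ⟨σ', hσ', rfl⟩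
  calc sInf ((fun τ' => pay U σ' τ') '' stdSimplex ℝ κ) ≤ pay U σ' τ :=
        csInf_le (bddBelow_pay_image_stdSimplex U σ') ⟨τ, hτ, rfl⟩
    _ ≤ pay U σ τ := hrow σ' hσ'

end MatrixGame

theorem double_oracle_exact_termination_general {ι κ : Type*}
    [Fintype ι] [Fintype κ] [Nonempty ι] [Nonempty κ] (U : ι → κ → ℝ)
    (σs : ι → ℝ) (τs : κ → ℝ)
    (hσ : σs ∈ stdSimplex ℝ ι) (hτ : τs ∈ stdSimplex ℝ κ)
    (v : ℝ) (hv : v = pay U σs τs)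
    (hBR_r : Finset.univ.sup' Finset.univ_nonempty (fun i => ∑ j, τs j * U i j) ≤ v)
    (hBR_c : v ≤ Finset.univ.inf' Finset.univ_nonempty (fun j => ∑ i, σs i * U i j)) :
    isNE U σs τs ∧
    IsGreatest ((fun σ => sInf ((fun τ => pay U σ τ) '' stdSimplex ℝ κ)) '' stdSimplex ℝ ι)
      v := by
  subst hv
  have hrow := (sup'_le_iff _ _).1 hBR_r
  have hcol := (le_inf'_iff _ _).1 hBR_c
  have hNE := isNE_of_forall_row_le_of_forall_le_col U hσ hτ
    (fun i => hrow i (mem_univ i)) (fun j => hcol j (mem_univ j))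
  exact ⟨hNE, hNE.isGreatest_sInf_pay⟩

/-- Exact termination correctness of the double oracle algorithm: if `(σ*, τ*)` is a mixed
Nash equilibrium of the restricted game on nonempty subsets `Pr ⊆ ι`, `Pc ⊆ κ` with payoff
`v = U(σ*, τ*)`, and the full-game best responses do not improve on `v`, then `(σ*, τ*)`
is a mixed Nash equilibrium of the full game with value `v`. -/
theorem double_oracle_exact_termination {ι κ : Type*}
    [Fintype ι] [Fintype κ] [Nonempty ι] [Nonempty κ] (U : ι → κ → ℝ)
    (Pr : Finset ι) (Pc : Finset κ) (hr : Pr.Nonempty) (hc : Pc.Nonempty)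
    (σs : ι → ℝ) (τs : κ → ℝ)
    (hσ : σs ∈ stdSimplex ℝ ι) (hτ : τs ∈ stdSimplex ℝ κ)
    (hσsupp : ∀ i ∉ Pr, σs i = 0) (hτsupp : ∀ j ∉ Pc, τs j = 0)
    (hRestrNE_r : ∀ σ ∈ stdSimplex ℝ ι, (∀ i ∉ Pr, σ i = 0) → pay U σ τs ≤ pay U σs τs)
    (hRestrNE_c : ∀ τ ∈ stdSimplex ℝ κ, (∀ j ∉ Pc, τ j = 0) → pay U σs τs ≤ pay U σs τ)
    (v : ℝ) (hv : v = pay U σs τs)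
    (hBR_r : Finset.univ.sup' Finset.univ_nonempty (fun i => ∑ j, τs j * U i j) ≤ v)
    (hBR_c : v ≤ Finset.univ.inf' Finset.univ_nonempty (fun j => ∑ i, σs i * U i j)) :
    isNE U σs τs ∧
    IsGreatest ((fun σ => sInf ((fun τ => pay U σ τ) '' stdSimplex ℝ κ)) '' stdSimplex ℝ ι)
      v :=
  double_oracle_exact_termination_general U σs τs hσ hτ v hv hBR_r hBR_c
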